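/- arXiv:1307.4138 — 9 statements merged into one kernel-verified Lean document; each statement's English description precedes it below -/
import Mathlib

section
/- Let (X,f) be a dynamical system and F a Furstenberg family. If (X,f) is F-point transitive, then (X,f) is Δ(F)-central, where Δ(F) is the difference family of F. -/
open Set Function

/-- Hitting time set `N(U,V) = {n ≥ 1 : U ∩ f⁻ⁿ(V) ≠ ∅}`. -/
def hitSet {X : Type*} (f : X → X) (U V : Set X) : Set ℕ :=
  {n | 0 < n ∧ (U ∩ f^[n] ⁻¹' V).Nonempty}

/-- Entering time set `N(x,U) = {n ≥ 1 : fⁿ(x) ∈ U}`. -/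
def entSet {X : Type*} (f : X → X) (x : X) (U : Set X) : Set ℕ :=
  {n | 0 < n ∧ f^[n] x ∈ U}

/-- A Furstenberg family: an upward-hereditary collection of subsets of ℕ. -/
def IsFamily (F : Set (Set ℕ)) : Prop :=
  ∀ A B : Set ℕ, A ⊆ B → A ∈ F → B ∈ F

/-- The difference set `A − A = {b − a : a, b ∈ A, b > a}`. -/
def diffSet (A : Set ℕ) : Set ℕ :=
  {n | 0 < n ∧ ∃ a ∈ A, a + n ∈ A}

/-- The difference family `Δ(F)`: all sets containing some `A − A` with `A ∈ F`. -/
def deltaFam (F : Set (Set ℕ)) : Set (Set ℕ) :=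
  {S | ∃ A ∈ F, diffSet A ⊆ S}

theorem stmt1 {X : Type*} [MetricSpace X] [CompactSpace X] (f : X → X)
    (hf : Continuous f) (F : Set (Set ℕ)) (hF : IsFamily F)
    (hpt : ∃ x : X, ∀ U : Set X, IsOpen U → U.Nonempty → entSet f x U ∈ F) :
    ∀ U : Set X, IsOpen U → U.Nonempty → hitSet f U U ∈ deltaFam F := by
  obtain ⟨x, hx⟩ := hpt
  intro U hU hUne
  refine ⟨entSet f x U, hx U hU hUne, ?_⟩
  rintro n ⟨hn, a, ⟨ha0, haU⟩, ⟨_, hanU⟩⟩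
  exact ⟨hn, f^[a] x, haU, by simpa [← Function.iterate_add_apply, Nat.add_comm] using hanU⟩
end

section
/- Let 𝔄 be a class of transitive dynamical systems. If 𝔄 contains at least one non-periodic transitive system and there exists a strongly mixing system not in 𝔄, then there is no Furstenberg family F such that a dynamical system belongs to 𝔄 if and only if it is F-transitive. -/
open Set Function

/-- A (bundled) topological dynamical system: a compact metric space together
with a continuous self-map. -/
structure DynSys where
  X : Type
  [m : MetricSpace X]
  [c : CompactSpace X]
  f : X → X
  hf : Continuous f

attribute [instance] DynSys.m DynSys.c

/-- Hitting time set `N(U,V) = {n ≥ 1 : U ∩ f⁻ⁿ(V) ≠ ∅}`. -/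
def DynSys.hit (S : DynSys) (U V : Set S.X) : Set ℕ :=
  {n | 0 < n ∧ (U ∩ S.f^[n] ⁻¹' V).Nonempty}

/-- `S` is topologically transitive. -/
def DynSys.Transitive (S : DynSys) : Prop :=
  ∀ U V : Set S.X, IsOpen U → IsOpen V → U.Nonempty → V.Nonempty →
    (S.hit U V).Nonempty

/-- `S` is strongly mixing: each `N(U,V)` contains a tail `[N,∞)`. -/
def DynSys.StronglyMixing (S : DynSys) : Prop :=
  ∀ U V : Set S.X, IsOpen U → IsOpen V → U.Nonempty → V.Nonempty →
    ∃ N : ℕ, 0 < N ∧ ∀ n : ℕ, N ≤ n → n ∈ S.hit U V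

/-- `S` is non-periodic: it has a transitive point (dense orbit) whose iterates
are pairwise distinct. -/
def DynSys.NonPeriodic (S : DynSys) : Prop :=
  ∃ x : S.X, Dense {y : S.X | ∃ n : ℕ, 0 < n ∧ S.f^[n] x = y} ∧
    ∀ i j : ℕ, i ≠ j → S.f^[i] x ≠ S.f^[j] x

/-- `S` is `F`-transitive for a family `F`. -/
def DynSys.FamTransitive (S : DynSys) (F : Set (Set ℕ)) : Prop :=
  ∀ U V : Set S.X, IsOpen U → IsOpen V → U.Nonempty → V.Nonempty →
    S.hit U V ∈ F


lemma key_lemma (S : DynSys) (hS : S.NonPeriodic) (N : ℕ) :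
    ∃ U : Set S.X, IsOpen U ∧ U.Nonempty ∧ S.hit U U ⊆ {n | N ≤ n} := by
  obtain ⟨x, -, hx⟩ := hS
  by_cases hN : N ≤ 1
  · refine ⟨Set.univ, isOpen_univ, ⟨x, trivial⟩, ?_⟩
    rintro n ⟨hn, -⟩
    exact le_trans hN hn
  · push_neg at hN
    have hK : (Finset.Ico 1 N).Nonempty := by
      refine ⟨1, ?_⟩
      simp only [Finset.mem_Ico]
      omega
    set δ : ℝ := (Finset.Ico 1 N).inf' hK (fun k => dist (S.f^[k] x) x) / 2 with hδdef
    have hδpos : 0 < δ := by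
      apply div_pos _ (by norm_num)
      rw [Finset.lt_inf'_iff]
      intro k hk
      have hk0 : k ≠ 0 := by
        simp only [Finset.mem_Ico] at hk; omega
      have := hx k 0 hk0
      simp only [Function.iterate_zero, id_eq] at this
      exact dist_pos.mpr this
    refine ⟨Metric.ball x δ ∩ ⋂ k ∈ Finset.Ico 1 N, S.f^[k] ⁻¹' Metric.ball (S.f^[k] x) δ,
      ?_, ⟨x, ?_⟩, ?_⟩
    · exact (Metric.isOpen_ball).inter (isOpen_biInter_finset fun k _ =>
        ((S.hf.iterate k)).isOpen_preimage _ Metric.isOpen_ball)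
    · refine ⟨Metric.mem_ball_self hδpos, ?_⟩
      simp only [Set.mem_iInter, Set.mem_preimage]
      intro k _
      exact Metric.mem_ball_self hδpos
    · rintro n ⟨hn, z, ⟨hz1, hz2⟩, hzn⟩
      by_contra hlt
      simp only [Set.mem_setOf_eq, not_le] at hlt
      have hnK : n ∈ Finset.Ico 1 N := by
        simp only [Finset.mem_Ico]; omega
      simp only [Set.mem_iInter, Set.mem_preimage] at hz2
      have h1 : S.f^[n] z ∈ Metric.ball (S.f^[n] x) δ := hz2 n hnK
      have h2 : S.f^[n] z ∈ Metric.ball x δ := hzn.1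
      have h3 : dist (S.f^[n] x) x < 2 * δ := by
        calc dist (S.f^[n] x) x ≤ dist (S.f^[n] x) (S.f^[n] z) + dist (S.f^[n] z) x :=
              dist_triangle _ _ _
          _ < δ + δ := add_lt_add (by rw [dist_comm]; exact Metric.mem_ball.mp h1)
              (Metric.mem_ball.mp h2)
          _ = 2 * δ := by ring
      have h4 : (Finset.Ico 1 N).inf' hK (fun k => dist (S.f^[k] x) x)
          ≤ dist (S.f^[n] x) x := Finset.inf'_le _ hnK
      rw [hδdef] at h3
      linarith

theorem stmt6 (C : DynSys → Prop)
    (hC : ∀ S : DynSys, C S → S.Transitive)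
    (hnp : ∃ S : DynSys, C S ∧ S.NonPeriodic)
    (hsm : ∃ S : DynSys, S.StronglyMixing ∧ ¬ C S) :
    ¬ ∃ F : Set (Set ℕ), (∀ A B : Set ℕ, A ⊆ B → A ∈ F → B ∈ F) ∧
        ∀ S : DynSys, C S ↔ S.FamTransitive F := by
  rintro ⟨F, hup, hiff⟩
  obtain ⟨S, hSC, hSnp⟩ := hnp
  obtain ⟨T, hTm, hTnC⟩ := hsm
  apply hTnC
  rw [hiff]
  intro U V hU hV hUne hVne
  obtain ⟨N, hNpos, hmem⟩ := hTm U V hU hV hUne hVne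
  obtain ⟨U', hU'o, hU'ne, hsub⟩ := key_lemma S hSnp N
  have hF : S.hit U' U' ∈ F := (hiff S).mp hSC U' U' hU'o hU'o hU'ne hU'ne
  exact hup _ _ (fun n hn => hmem n (hsub hn)) hF
end

section
/- Let (X,f) be a dynamical system that is Δ-a-transitive for a = (a₁,…,a_r) ∈ ℕ^r_* (a₁<⋯<a_r). Then the set of points x ∈ X such that (x,…,x) is a transitive point of (X^r, f^{a₁}×⋯×f^{a_r}) is a dense Gδ (residual) subset of X. -/
open Set Function

/-- The product map `f^{(a)} = f^{a₁} × ⋯ × f^{a_r}` on `X^r`. -/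
def prodIter {X : Type*} (f : X → X) {r : ℕ} (a : Fin r → ℕ) :
    (Fin r → X) → (Fin r → X) :=
  fun y i => f^[a i] (y i)

/-- `(X,f)` is Δ-transitive with respect to the vector `a`: some diagonal point
`(x,…,x)` has dense orbit in `X^r` under `f^{a₁} × ⋯ × f^{a_r}`. -/
def DeltaTrans {X : Type*} [TopologicalSpace X] (f : X → X) {r : ℕ}
    (a : Fin r → ℕ) : Prop :=
  ∃ x : X, Dense {z : Fin r → X | ∃ n : ℕ, 0 < n ∧
    (prodIter f a)^[n] (fun _ => x) = z}

/-! The transitive diagonal points form a Gδ: for a countable basis `(Uₖ)` of `X^r` they are the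
`x` such that for every `k` some `(f^{a₁ n} x, …, f^{a_r n} x)` with `n ≥ 1` lies in `Uₖ`.
Density needs no Baire argument. If `(x₀, …, x₀)` is transitive, `f` has dense range, so the
map `f^c × ⋯ × f^c`, which commutes with `f^{a₁} × ⋯ × f^{a_r}` and has dense range, carries the
dense orbit of `(x₀, …, x₀)` onto the orbit of `(f^c x₀, …, f^c x₀)`; and the points `f^c x₀`
are dense in `X`, since they contain a coordinate projection of that orbit. -/

def posOrbit {Y : Type*} (g : Y → Y) (y : Y) : Set Y :=
  {z | ∃ n : ℕ, 0 < n ∧ g^[n] y = z}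

theorem posOrbit_apply_of_commute {Y : Type*} {g h : Y → Y} (hgh : Function.Commute g h)
    (y : Y) : posOrbit g (h y) = h '' posOrbit g y := by
  ext z
  constructor
  · rintro ⟨n, hn, rfl⟩
    exact ⟨g^[n] y, ⟨n, hn, rfl⟩, ((hgh.iterate_left n).eq y).symm⟩
  · rintro ⟨_, ⟨n, hn, rfl⟩, rfl⟩
    exact ⟨n, hn, (hgh.iterate_left n).eq y⟩

section Topology

variable {X Y : Type*} [TopologicalSpace X] [TopologicalSpace Y]

theorem Dense.posOrbit_apply_of_commute {g h : Y → Y} (hgh : Function.Commute g h)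
    (hh : Continuous h) (hh' : DenseRange h) {y : Y} (hy : Dense (posOrbit g y)) :
    Dense (posOrbit g (h y)) := by
  rw [_root_.posOrbit_apply_of_commute hgh]
  exact hh'.dense_image hh hy

theorem dense_posOrbit_of_subsingleton [Subsingleton Y] (g : Y → Y) (y : Y) :
    Dense (posOrbit g y) := by
  rw [Set.Nonempty.eq_univ (s := posOrbit g y) ⟨g y, 1, one_pos, rfl⟩]
  exact dense_univ

theorem isGδ_setOf_dense_posOrbit [SecondCountableTopology Y] {g : Y → Y} (hg : Continuous g)
    {φ : X → Y} (hφ : Continuous φ) : IsGδ {x | Dense (posOrbit g (φ x))} := by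
  obtain ⟨b, hbc, hbne, hb⟩ := TopologicalSpace.exists_countable_basis Y
  have hset : {x | Dense (posOrbit g (φ x))} =
      ⋂ U ∈ b, ⋃ n ∈ {n : ℕ | 0 < n}, (fun x => g^[n] (φ x)) ⁻¹' U := by
    ext x
    simp only [hb.dense_iff, mem_iInter, mem_iUnion, mem_preimage]
    refine forall₂_congr fun U hU => ?_
    rw [imp_iff_right (nonempty_iff_ne_empty.2 (ne_of_mem_of_not_mem hU hbne))]
    constructor
    · rintro ⟨_, hz, n, hn, rfl⟩
      exact ⟨n, hn, hz⟩
    · rintro ⟨n, hn, hz⟩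
      exact ⟨_, hz, n, hn, rfl⟩
  rw [hset]
  exact .biInter hbc fun U hU => (isOpen_biUnion fun n _ =>
    (hb.isOpen hU).preimage ((hg.iterate n).comp hφ)).isGδ

theorem DenseRange.iterate {f : X → X} (hf' : DenseRange f) (hf : Continuous f) (n : ℕ) :
    DenseRange f^[n] := by
  induction n with
  | zero => exact denseRange_id
  | succ n ih => rw [iterate_succ']; exact hf'.comp ih hf

end Topology

section prodIter

variable {X : Type*} (f : X → X) {r : ℕ} (a : Fin r → ℕ)

theorem prodIter_iterate_apply (n : ℕ) (w : Fin r → X) (i : Fin r) :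
    (prodIter f a)^[n] w i = f^[a i * n] (w i) := by
  induction n with
  | zero => rfl
  | succ n ih =>
    rw [iterate_succ_apply', Nat.mul_succ, add_comm, iterate_add_apply, ← ih]
    rfl

theorem commute_prodIter (b : Fin r → ℕ) : Function.Commute (prodIter f a) (prodIter f b) :=
  fun w => funext fun i => (Function.Commute.iterate_iterate_self f (a i) (b i)).eq (w i)

variable [TopologicalSpace X]

theorem continuous_prodIter (hf : Continuous f) : Continuous (prodIter f a) :=
  continuous_pi fun i => (hf.iterate (a i)).comp (continuous_apply i)

theorem denseRange_prodIter (hf : Continuous f) (hf' : DenseRange f) :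
    DenseRange (prodIter f a) :=
  DenseRange.piMap fun i => hf'.iterate hf (a i)

variable {f a} {x : X}

theorem exists_iterate_mul_mem_of_dense_posOrbit
    (hx : Dense (posOrbit (prodIter f a) (fun _ => x))) (i : Fin r) {V : Set X} (hV : IsOpen V)
    (hVne : V.Nonempty) : ∃ n, 0 < n ∧ f^[a i * n] x ∈ V := by
  obtain ⟨v, hv⟩ := hVne
  obtain ⟨_, hz, n, hn, rfl⟩ :=
    hx.inter_open_nonempty _ (hV.preimage (continuous_apply i)) ⟨fun _ => v, hv⟩
  exact ⟨n, hn, by rwa [mem_preimage, prodIter_iterate_apply] at hz⟩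

theorem denseRange_of_dense_posOrbit
    (hx : Dense (posOrbit (prodIter f a) (fun _ => x))) {i : Fin r} (hi : 0 < a i) :
    DenseRange f := by
  refine dense_iff_inter_open.2 fun V hV hVne => ?_
  obtain ⟨n, hn, hnV⟩ := exists_iterate_mul_mem_of_dense_posOrbit hx i hV hVne
  obtain ⟨k, hk⟩ := Nat.exists_eq_add_one_of_ne_zero (Nat.mul_pos hi hn).ne'
  rw [hk, iterate_succ_apply'] at hnV
  exact ⟨_, hnV, mem_range_self _⟩

theorem dense_range_iterate_of_dense_posOrbit
    (hx : Dense (posOrbit (prodIter f a) (fun _ => x))) (i : Fin r) :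
    Dense (range fun c => f^[c] x) :=
  dense_iff_inter_open.2 fun _ hV hVne =>
    let ⟨_, _, hnV⟩ := exists_iterate_mul_mem_of_dense_posOrbit hx i hV hVne
    ⟨_, hnV, mem_range_self _⟩

theorem Dense.posOrbit_prodIter_iterate
    (hx : Dense (posOrbit (prodIter f a) (fun _ => x))) (hf : Continuous f)
    (hf' : DenseRange f) (c : ℕ) : Dense (posOrbit (prodIter f a) (fun _ => f^[c] x)) :=
  hx.posOrbit_apply_of_commute (commute_prodIter f a fun _ => c)
    (continuous_prodIter f _ hf) (denseRange_prodIter f _ hf hf')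

end prodIter

theorem stmt10_general {X : Type*} [MetricSpace X] [CompactSpace X] (f : X → X)
    (hf : Continuous f) {r : ℕ} (a : Fin r → ℕ) (ha : ∀ i, 0 < a i)
    (hΔ : DeltaTrans f a) :
    Dense {x : X | Dense {z : Fin r → X | ∃ n : ℕ, 0 < n ∧
        (prodIter f a)^[n] (fun _ => x) = z}} ∧
      IsGδ {x : X | Dense {z : Fin r → X | ∃ n : ℕ, 0 < n ∧
        (prodIter f a)^[n] (fun _ => x) = z}} := by
  obtain ⟨x₀, hx₀⟩ := hΔ
  refine ⟨?_, isGδ_setOf_dense_posOrbit (continuous_prodIter f a hf)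
    (continuous_pi fun _ => continuous_id)⟩
  rcases r.eq_zero_or_pos with rfl | hr
  · exact dense_univ.mono fun _ _ => dense_posOrbit_of_subsingleton _ _
  · have hf' := denseRange_of_dense_posOrbit hx₀ (ha ⟨0, hr⟩)
    exact (dense_range_iterate_of_dense_posOrbit hx₀ ⟨0, hr⟩).mono
      (range_subset_iff.2 (hx₀.posOrbit_prodIter_iterate hf hf'))

theorem stmt10 {X : Type*} [MetricSpace X] [CompactSpace X] (f : X → X)
    (hf : Continuous f) {r : ℕ} (a : Fin r → ℕ) (ha : ∀ i, 0 < a i)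
    (hmono : StrictMono a) (hΔ : DeltaTrans f a) :
    Dense {x : X | Dense {z : Fin r → X | ∃ n : ℕ, 0 < n ∧
        (prodIter f a)^[n] (fun _ => x) = z}} ∧
      IsGδ {x : X | Dense {z : Fin r → X | ∃ n : ℕ, 0 < n ∧
        (prodIter f a)^[n] (fun _ => x) = z}} :=
  stmt10_general f hf a ha hΔ
end

section
/- If a dynamical system (X,f) is Δ-transitive with respect to the vector (1,2) (i.e., there exists x ∈ X with {(fⁿ(x), f^{2n}(x)) : n ∈ ℕ} dense in X×X), then (X,f) is weakly mixing. -/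
open Set Function

/-- `(X,f)` is weakly mixing: the product system `(X×X, f×f)` is transitive. -/
def WeaklyMixing {X : Type*} [TopologicalSpace X] (f : X → X) : Prop :=
  ∀ U V : Set (X × X), IsOpen U → IsOpen V → U.Nonempty → V.Nonempty →
    ∃ n : ℕ, 0 < n ∧ (U ∩ (Prod.map f f)^[n] ⁻¹' V).Nonempty

namespace Stmt11Aux

variable {X : Type*} [TopologicalSpace X] {f : X → X} {x : X}

/-- From density of the `(1,2)`-diagonal orbit: hitting any open rectangle. -/
lemma delta (hx : Dense {p : X × X | ∃ n : ℕ, 0 < n ∧ (f^[n] x, f^[2 * n] x) = p})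
    {A B : Set X} (hA : IsOpen A) (hB : IsOpen B) (hA' : A.Nonempty) (hB' : B.Nonempty) :
    ∃ n : ℕ, 0 < n ∧ f^[n] x ∈ A ∧ f^[2 * n] x ∈ B := by
  obtain ⟨p, hp, hpU⟩ := hx.exists_mem_open (hA.prod hB) (hA'.prod hB')
  obtain ⟨n, hn, rfl⟩ := hp
  exact ⟨n, hn, hpU.1, hpU.2⟩

/-- The orbit of `x` visits every nonempty open set at arbitrarily large times. -/
lemma tail (hf : Continuous f)
    (hx : Dense {p : X × X | ∃ n : ℕ, 0 < n ∧ (f^[n] x, f^[2 * n] x) = p}) :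
    ∀ d : ℕ, ∀ B : Set X, IsOpen B → B.Nonempty → ∃ e : ℕ, d ≤ e ∧ f^[e] x ∈ B := by
  intro d
  induction d with
  | zero =>
    intro B hB hB'
    obtain ⟨u, _, h1, _⟩ := delta hx hB hB hB' hB'
    exact ⟨u, Nat.zero_le _, h1⟩
  | succ d ih =>
    intro B hB hB'
    obtain ⟨u, hu, h1, h2⟩ := delta hx hB hB hB' hB'
    have hBo : IsOpen (B ∩ f^[u] ⁻¹' B) := hB.inter (hB.preimage (hf.iterate u))
    have hmem : f^[u] x ∈ B ∩ f^[u] ⁻¹' B := by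
      refine ⟨h1, ?_⟩
      show f^[u] (f^[u] x) ∈ B
      rw [← Function.iterate_add_apply, ← two_mul]
      exact h2
    obtain ⟨e, hde, he⟩ := ih _ hBo ⟨_, hmem⟩
    refine ⟨u + e, by omega, ?_⟩
    have := he.2
    show f^[u + e] x ∈ B
    rw [Function.iterate_add_apply]
    exact this

/-- Common-source lemma: a single time `n` transferring `U` into `V`, with a second
witness transferring `U` into `V` at time `n + d`, for any prescribed `d`. -/
lemma commonSource (hf : Continuous f)
    (hx : Dense {p : X × X | ∃ n : ℕ, 0 < n ∧ (f^[n] x, f^[2 * n] x) = p})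
    {U V : Set X} (hU : IsOpen U) (hV : IsOpen V) (hU' : U.Nonempty) (hV' : V.Nonempty)
    (d : ℕ) :
    ∃ n : ℕ, 0 < n ∧ (∃ u ∈ U, f^[n] u ∈ V) ∧ (∃ u' ∈ U, f^[n + d] u' ∈ V) := by
  -- the shifted target `f^[d] ⁻¹' V` is open and nonempty (by the tail lemma)
  obtain ⟨e, hde, he⟩ := tail hf hx d V hV hV'
  have hV₂o : IsOpen (f^[d] ⁻¹' V) := hV.preimage (hf.iterate d)
  have hV₂ne : (f^[d] ⁻¹' V).Nonempty := by
    refine ⟨f^[e - d] x, ?_⟩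
    show f^[d] (f^[e - d] x) ∈ V
    rw [← Function.iterate_add_apply, show d + (e - d) = e from by omega]
    exact he
  obtain ⟨m₁, hm₁, h₁U, h₁V⟩ := delta hx hU hV hU' hV'
  have hPo : IsOpen (U ∩ f^[m₁] ⁻¹' V) := hU.inter (hV.preimage (hf.iterate m₁))
  have hPne : (U ∩ f^[m₁] ⁻¹' V).Nonempty := by
    refine ⟨f^[m₁] x, h₁U, ?_⟩
    show f^[m₁] (f^[m₁] x) ∈ V
    rw [← Function.iterate_add_apply, ← two_mul]
    exact h₁V
  obtain ⟨m₂, hm₂, h₂P, h₂V₂⟩ := delta hx hPo hV₂o hPne hV₂ne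
  refine ⟨m₂, hm₂, ⟨f^[m₁] x, h₁U, ?_⟩, ⟨f^[m₂] x, h₂P.1, ?_⟩⟩
  · -- `f^[m₂] (f^[m₁] x) ∈ V`
    have h := h₂P.2
    show f^[m₂] (f^[m₁] x) ∈ V
    have h' : f^[m₁] (f^[m₂] x) ∈ V := h
    rw [← Function.iterate_add_apply] at h' ⊢
    rwa [add_comm]
  · -- `f^[m₂ + d] (f^[m₂] x) ∈ V`
    have h : f^[d] (f^[2 * m₂] x) ∈ V := h₂V₂
    show f^[m₂ + d] (f^[m₂] x) ∈ V
    rw [← Function.iterate_add_apply] at h ⊢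
    rw [show m₂ + d + m₂ = d + 2 * m₂ from by ring]
    exact h

/-- The main combinatorial step: a common transfer time for two pairs of open sets. -/
lemma quad (hf : Continuous f)
    (hx : Dense {p : X × X | ∃ n : ℕ, 0 < n ∧ (f^[n] x, f^[2 * n] x) = p})
    {A B C D : Set X} (hA : IsOpen A) (hB : IsOpen B) (hC : IsOpen C) (hD : IsOpen D)
    (hA' : A.Nonempty) (hB' : B.Nonempty) (hC' : C.Nonempty) (hD' : D.Nonempty) :
    ∃ n : ℕ, 0 < n ∧ (∃ p ∈ A, f^[n] p ∈ C) ∧ ∃ q ∈ B, f^[n] q ∈ D := by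
  -- r transfers A into B (on the orbit); s transfers C into D
  obtain ⟨r, hr, hrA, hrB⟩ := delta hx hA hB hA' hB'
  obtain ⟨s, hs, hsC, hsD⟩ := delta hx hC hD hC' hD'
  set A₁ : Set X := A ∩ f^[r] ⁻¹' B with hA₁def
  set C₁ : Set X := C ∩ f^[s] ⁻¹' D with hC₁def
  have hA₁o : IsOpen A₁ := hA.inter (hB.preimage (hf.iterate r))
  have hA₁ne : A₁.Nonempty := by
    refine ⟨f^[r] x, hrA, ?_⟩
    show f^[r] (f^[r] x) ∈ B
    rw [← Function.iterate_add_apply, ← two_mul]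
    exact hrB
  have hC₁o : IsOpen C₁ := hC.inter (hD.preimage (hf.iterate s))
  have hC₁ne : C₁.Nonempty := by
    refine ⟨f^[s] x, hsC, ?_⟩
    show f^[s] (f^[s] x) ∈ D
    rw [← Function.iterate_add_apply, ← two_mul]
    exact hsD
  rcases le_or_gt r s with hle | hlt
  · -- d = s - r ; final time n + d
    obtain ⟨n, hn, ⟨u, huA₁, hun⟩, ⟨u', hu'A₁, hu'n⟩⟩ :=
      commonSource hf hx hA₁o hC₁o hA₁ne hC₁ne (s - r)
    refine ⟨n + (s - r), by omega, ⟨u', hu'A₁.1, hu'n.1⟩, ⟨f^[r] u, huA₁.2, ?_⟩⟩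
    -- `f^[n + (s-r)] (f^[r] u) ∈ D` since `f^[n] u ∈ C₁ ⊆ f^[s] ⁻¹' D`
    have h : f^[s] (f^[n] u) ∈ D := hun.2
    rw [← Function.iterate_add_apply] at h
    show f^[n + (s - r)] (f^[r] u) ∈ D
    rw [← Function.iterate_add_apply, show n + (s - r) + r = s + n from by omega]
    exact h
  · -- d = r - s ; final time n
    obtain ⟨n, hn, ⟨u, huA₁, hun⟩, ⟨u', hu'A₁, hu'n⟩⟩ :=
      commonSource hf hx hA₁o hC₁o hA₁ne hC₁ne (r - s)
    refine ⟨n, hn, ⟨u, huA₁.1, hun.1⟩, ⟨f^[r] u', hu'A₁.2, ?_⟩⟩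
    -- `f^[n] (f^[r] u') ∈ D` since `f^[n + (r-s)] u' ∈ C₁ ⊆ f^[s] ⁻¹' D`
    have h : f^[s] (f^[n + (r - s)] u') ∈ D := hu'n.2
    rw [← Function.iterate_add_apply] at h
    show f^[n] (f^[r] u') ∈ D
    rw [← Function.iterate_add_apply, show n + r = s + (n + (r - s)) from by omega]
    exact h

end Stmt11Aux

theorem stmt11 {X : Type*} [MetricSpace X] [CompactSpace X] (f : X → X)
    (hf : Continuous f)
    (hΔ : ∃ x : X, Dense {p : X × X | ∃ n : ℕ, 0 < n ∧
        (f^[n] x, f^[2 * n] x) = p}) :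
    WeaklyMixing f := by
  obtain ⟨x, hx⟩ := hΔ
  intro U V hU hV hU' hV'
  obtain ⟨⟨a, b⟩, hab⟩ := hU'
  obtain ⟨⟨c, e⟩, hce⟩ := hV'
  obtain ⟨A, B, hAo, hBo, haA, hbB, hABU⟩ := isOpen_prod_iff.mp hU a b hab
  obtain ⟨C, D, hCo, hDo, hcC, heD, hCDV⟩ := isOpen_prod_iff.mp hV c e hce
  obtain ⟨n, hn, ⟨p, hpA, hpC⟩, ⟨q, hqB, hqD⟩⟩ :=
    Stmt11Aux.quad hf hx hAo hBo hCo hDo ⟨a, haA⟩ ⟨b, hbB⟩ ⟨c, hcC⟩ ⟨e, heD⟩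
  have hiter : ∀ (m : ℕ) (y : X × X), (Prod.map f f)^[m] y = (f^[m] y.1, f^[m] y.2) := by
    intro m
    induction m with
    | zero => intro y; simp
    | succ k ih =>
      intro y
      rw [Function.iterate_succ_apply, ih]
      simp [Function.iterate_succ_apply, Prod.map]
  refine ⟨n, hn, ⟨(p, q), hABU ⟨hpA, hqB⟩, ?_⟩⟩
  show (Prod.map f f)^[n] (p, q) ∈ V
  rw [hiter]
  exact hCDV ⟨hpC, hqD⟩
end

section
/- Let (X,f) be a dynamical system and a = (a₁,…,a_r) ∈ ℕ^r_* (strictly increasing). Then (X,f) is Δ-a-transitive if and only if (X,f) is F[a]-point transitive, i.e., there exists x ∈ X such that for every non-empty open U ⊆ X, the set N(x,U) belongs to F[a]. -/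
open Set Function

/-- The family `F[a]` generated by a vector `a ∈ ℕ^r`. -/
def vecFam {r : ℕ} (a : Fin r → ℕ) : Set (Set ℕ) :=
  {F | ∀ n : Fin r → ℕ, ∃ k : ℕ, 0 < k ∧ ∀ i : Fin r, k * a i + n i ∈ F}

lemma prodIter_iterate {X : Type*} (f : X → X) {r : ℕ} (a : Fin r → ℕ)
    (n : ℕ) (y : Fin r → X) :
    (prodIter f a)^[n] y = fun i => f^[n * a i] (y i) := by
  induction n with
  | zero => simp
  | succ n ih =>
    rw [Function.iterate_succ_apply', ih]
    funext i
    show f^[a i] (f^[n * a i] (y i)) = f^[(n+1) * a i] (y i)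
    rw [← Function.iterate_add_apply]
    congr 1
    ring

theorem stmt12 {X : Type*} [MetricSpace X] [CompactSpace X] (f : X → X)
    (hf : Continuous f) {r : ℕ} (a : Fin r → ℕ) (ha : ∀ i, 0 < a i)
    (hmono : StrictMono a) :
    DeltaTrans f a ↔
      ∃ x : X, ∀ U : Set X, IsOpen U → U.Nonempty → entSet f x U ∈ vecFam a := by
  constructor
  · rintro ⟨x, hx⟩
    refine ⟨x, ?_⟩
    intro U hU hUne n
    rcases isEmpty_or_nonempty (Fin r) with hre | hrne
    · exact ⟨1, one_pos, fun i => (hre.false i).elim⟩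
    obtain ⟨i0⟩ := hrne
    -- f is surjective
    have hsurj : Surjective f := by
      intro y
      have hcl : IsClosed {z : Fin r → X | z i0 ∈ range f} :=
        (isCompact_range hf).isClosed.preimage (continuous_apply i0)
    -- the dense orbit is contained in this closed set
      have hsub : {z : Fin r → X | ∃ n : ℕ, 0 < n ∧
          (prodIter f a)^[n] (fun _ => x) = z} ⊆ {z : Fin r → X | z i0 ∈ range f} := by
        rintro z ⟨k, hk, rfl⟩
        rw [prodIter_iterate]
        show f^[k * a i0] x ∈ range f
        obtain ⟨m, hm⟩ := Nat.exists_eq_succ_of_ne_zero (Nat.mul_pos hk (ha i0)).ne'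
        rw [hm, Function.iterate_succ_apply']
        exact mem_range_self _
      have := closure_minimal hsub hcl
      have hy : (fun _ => y : Fin r → X) ∈ closure {z : Fin r → X | ∃ n : ℕ, 0 < n ∧
          (prodIter f a)^[n] (fun _ => x) = z} := hx _
      exact this hy
    -- preimages are nonempty open
    obtain ⟨u0, hu0⟩ := hUne
    have hWne : ∀ i, (f^[n i] ⁻¹' U).Nonempty := fun i => by
      obtain ⟨w, hw⟩ := (hsurj.iterate (n i)) u0
      exact ⟨w, by simp [hw, hu0]⟩
    have hWopen : IsOpen (Set.pi (univ : Set (Fin r)) (fun i => f^[n i] ⁻¹' U)) :=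
      isOpen_set_pi finite_univ (fun i _ => hU.preimage (hf.iterate (n i)))
    have hWne' : (Set.pi (univ : Set (Fin r)) (fun i => f^[n i] ⁻¹' U)).Nonempty := by
      choose w hw using hWne
      exact ⟨w, fun i _ => hw i⟩
    obtain ⟨z, hzW, k, hk, hzD⟩ := dense_iff_inter_open.mp hx _ hWopen hWne'
    refine ⟨k, hk, fun i => ?_⟩
    constructor
    · have := Nat.mul_pos hk (ha i); omega
    · have h1 : z i ∈ f^[n i] ⁻¹' U := hzW i (mem_univ i)
      rw [← hzD, prodIter_iterate] at h1
      have : f^[n i] (f^[k * a i] x) ∈ U := h1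
      rwa [← Function.iterate_add_apply, Nat.add_comm] at this
  · rintro ⟨x, hx⟩
    refine ⟨x, ?_⟩
    rw [dense_iff_inter_open]
    rintro O hO ⟨z, hz⟩
    rcases isEmpty_or_nonempty (Fin r) with hre | hrne
    · exact ⟨z, hz, 1, one_pos, funext fun i => (hre.false i).elim⟩
    obtain ⟨i0⟩ := hrne
    obtain ⟨I, u, hu, hsub⟩ := isOpen_pi_iff.mp hO z hz
    set U' : Fin r → Set X := fun i => if h : i ∈ I then u i else univ with hU'
    have hU'open : ∀ i, IsOpen (U' i) := by
      intro i; rw [hU']; dsimp only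
      split
      · exact (hu i (by assumption)).1
      · exact isOpen_univ
    have hzU' : ∀ i, z i ∈ U' i := by
      intro i; rw [hU']; dsimp only
      split
      · exact (hu i (by assumption)).2
      · trivial
    -- find visiting times for each U' i
    have ht : ∀ i, ∃ t : ℕ, f^[t] x ∈ U' i := by
      intro i
      obtain ⟨k, hk, hmem⟩ := hx (U' i) (hU'open i) ⟨z i, hzU' i⟩ (fun _ => 0)
      exact ⟨k * a i0 + 0, (hmem i0).2⟩
    choose t htmem using ht
    -- continuity radii
    have hcont : ∀ i, ∃ ε > (0:ℝ), ∀ y, dist y x < ε → f^[t i] y ∈ U' i := by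
      intro i
      have hca : ContinuousAt (f^[t i]) x := (hf.iterate (t i)).continuousAt
      have h2 := hca ((hU'open i).mem_nhds (htmem i))
      rw [Filter.mem_map, Metric.mem_nhds_iff] at h2
      obtain ⟨ε, hε, hb⟩ := h2
      exact ⟨ε, hε, fun y hy => hb hy⟩
    choose ε hεpos hε using hcont
    have hFne : (Finset.univ : Finset (Fin r)).Nonempty := ⟨i0, Finset.mem_univ i0⟩
    set εm := Finset.univ.inf' hFne ε with hεm
    have hεmpos : 0 < εm := by
      rw [hεm, Finset.lt_inf'_iff]
      exact fun i _ => hεpos i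
    have hεmle : ∀ i, εm ≤ ε i := fun i => Finset.inf'_le ε (Finset.mem_univ i)
    set d := Finset.univ.sup t with hd
    have hdle : ∀ i, t i ≤ d * a i := fun i =>
      le_trans (Finset.le_sup (Finset.mem_univ i)) (Nat.le_mul_of_pos_right d (ha i))
    obtain ⟨k, hk, hmem⟩ := hx (Metric.ball x εm) Metric.isOpen_ball
      ⟨x, Metric.mem_ball_self hεmpos⟩ (fun i => d * a i - t i)
    refine ⟨(prodIter f a)^[k + d] (fun _ => x), ?_, k + d, by omega, rfl⟩
    refine hsub ?_
    intro i hiI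
    rw [prodIter_iterate]
    show f^[(k + d) * a i] x ∈ u i
    have h1 : f^[k * a i + (d * a i - t i)] x ∈ Metric.ball x εm := (hmem i).2
    have h2 : f^[t i] (f^[k * a i + (d * a i - t i)] x) ∈ U' i :=
      hε i _ (lt_of_lt_of_le (Metric.mem_ball.mp h1) (hεmle i))
    rw [← Function.iterate_add_apply] at h2
    have harith : t i + (k * a i + (d * a i - t i)) = (k + d) * a i := by
      rw [Nat.add_left_comm, Nat.add_sub_cancel' (hdle i), add_mul]
    rw [harith] at h2
    simp only [hU'] at h2
    rwa [dif_pos (Finset.mem_coe.mp hiI)] at h2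
end

section
/- Let (X,f) be a multi-minimal dynamical system (i.e., (X^n, f×f²×⋯×fⁿ) is minimal for every n ∈ ℕ). Then for every r ∈ ℕ, the system (X, f^r) is multi-minimal. -/
open Set Function

/-- A system is minimal: no proper non-empty closed invariant subset. -/
def MinimalSys {Y : Type*} [TopologicalSpace Y] (g : Y → Y) : Prop :=
  ∀ K : Set Y, IsClosed K → K.Nonempty → Set.MapsTo g K K → K = Set.univ

/-- `(X,f)` is multi-minimal: `(Xⁿ, f × f² × ⋯ × fⁿ)` is minimal for every `n ≥ 1`. -/
def MultiMinimal {X : Type*} [TopologicalSpace X] (f : X → X) : Prop :=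
  ∀ n : ℕ, 0 < n →
    MinimalSys (fun y : Fin n → X => fun i => f^[(i : ℕ) + 1] (y i))

theorem stmt15 {X : Type*} [MetricSpace X] [CompactSpace X] (f : X → X)
    (hf : Continuous f) (hmm : MultiMinimal f) :
    ∀ r : ℕ, 0 < r → MultiMinimal (f^[r]) := by
  intro r hr n hn K hK hKne hKmaps
  have hnr : 0 < n * r := Nat.mul_pos hn hr
  have hidx : ∀ i : Fin n, r * ((i : ℕ) + 1) - 1 < n * r := by
    intro i
    have h1 : (i : ℕ) + 1 ≤ n := i.2
    have : r * ((i : ℕ) + 1) ≤ n * r := by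
      calc r * ((i : ℕ) + 1) ≤ r * n := Nat.mul_le_mul_left r h1
        _ = n * r := Nat.mul_comm r n
    omega
  set π : (Fin (n * r) → X) → (Fin n → X) :=
    fun y i => y ⟨r * ((i : ℕ) + 1) - 1, hidx i⟩ with hπ
  have hπc : Continuous π := continuous_pi fun i => continuous_apply _
  -- semiconjugacy
  have hsemi : ∀ y : Fin (n * r) → X,
      π (fun j => f^[(j : ℕ) + 1] (y j)) = fun i : Fin n => (f^[r])^[(i : ℕ) + 1] (π y i) := by
    intro y
    funext i
    have hpos : 1 ≤ r * ((i : ℕ) + 1) := Nat.one_le_iff_ne_zero.2 (by positivity)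
    simp only [hπ]
    rw [← Function.iterate_mul]
    congr 1
    omega
  -- surjectivity of π
  have hπsurj : ∀ x : Fin n → X, ∃ y, π y = x := by
    intro x
    refine ⟨fun j => x ⟨min (((j : ℕ) + 1) / r - 1) (n - 1), by omega⟩, ?_⟩
    funext i
    simp only [hπ]
    congr 1
    have hpos : 1 ≤ r * ((i : ℕ) + 1) := Nat.one_le_iff_ne_zero.2 (by positivity)
    have hdiv : (r * ((i : ℕ) + 1) - 1 + 1) / r = (i : ℕ) + 1 := by
      have h1 : r * ((i : ℕ) + 1) - 1 + 1 = r * ((i : ℕ) + 1) := by omega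
      rw [h1, Nat.mul_div_cancel_left _ hr]
    ext
    simp only [hdiv]
    have : (i : ℕ) ≤ n - 1 := by have := i.2; omega
    omega
  -- apply minimality of the big system to π ⁻¹' K
  obtain ⟨x0, hx0⟩ := hKne
  obtain ⟨y0, hy0⟩ := hπsurj x0
  have hpre : π ⁻¹' K = Set.univ := by
    refine hmm (n * r) hnr (π ⁻¹' K) (hK.preimage hπc) ⟨y0, by simp [Set.mem_preimage, hy0, hx0]⟩ ?_
    intro y hy
    simp only [Set.mem_preimage] at hy ⊢
    rw [hsemi y]
    exact hKmaps hy
  ext x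
  simp only [Set.mem_univ, iff_true]
  obtain ⟨y, hy⟩ := hπsurj x
  have : y ∈ π ⁻¹' K := hpre ▸ Set.mem_univ y
  rwa [Set.mem_preimage, hy] at this
end

section
/- A dynamical system (X,f) is strongly multi-transitive (i.e., for every r ∈ ℕ and every vector a ∈ ℕ^r the product system (X^r, f^{a₁}×⋯×f^{a_r}) is transitive) if and only if (X,f) is both weakly mixing and multi-transitive (i.e., (X^n, f×f²×⋯×fⁿ) is transitive for every n). -/
open Set Function

/-- The product system `(X^r, f^{a₁}×⋯×f^{a_r})` is transitive. -/
def VecTrans {X : Type*} [TopologicalSpace X] (f : X → X) {r : ℕ}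
    (a : Fin r → ℕ) : Prop :=
  ∀ U V : Set (Fin r → X), IsOpen U → IsOpen V → U.Nonempty → V.Nonempty →
    ∃ n : ℕ, 0 < n ∧ (U ∩ (prodIter f a)^[n] ⁻¹' V).Nonempty

/-- `(X,f)` is strongly multi-transitive: it is `a`-transitive for every vector. -/
def StronglyMultiTrans {X : Type*} [TopologicalSpace X] (f : X → X) : Prop :=
  ∀ r : ℕ, 0 < r → ∀ a : Fin r → ℕ, (∀ i, 0 < a i) → VecTrans f a

/-- `(X,f)` is multi-transitive: it is `(1,2,…,n)`-transitive for every `n`. -/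
def MultiTrans {X : Type*} [TopologicalSpace X] (f : X → X) : Prop :=
  ∀ n : ℕ, 0 < n → VecTrans f (fun i : Fin n => (i : ℕ) + 1)

/-- Furstenberg intersection trick: weak mixing merges two hitting-time
conditions into one. -/
lemma wm_merge {X : Type*} [TopologicalSpace X] {f : X → X}
    (hwm : WeaklyMixing f) (hf : Continuous f)
    {U₁ V₁ U₂ V₂ : Set X} (hU₁ : IsOpen U₁) (hV₁ : IsOpen V₁)
    (hU₂ : IsOpen U₂) (hV₂ : IsOpen V₂)
    (hU₁n : U₁.Nonempty) (hV₁n : V₁.Nonempty)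
    (hU₂n : U₂.Nonempty) (hV₂n : V₂.Nonempty) :
    ∃ U V : Set X, IsOpen U ∧ IsOpen V ∧ U.Nonempty ∧ V.Nonempty ∧
      ∀ n, (U ∩ f^[n] ⁻¹' V).Nonempty →
        (U₁ ∩ f^[n] ⁻¹' V₁).Nonempty ∧ (U₂ ∩ f^[n] ⁻¹' V₂).Nonempty := by
  obtain ⟨m, hm, p, hp1, hp2⟩ := hwm (U₁ ×ˢ V₁) (U₂ ×ˢ V₂)
    (hU₁.prod hV₁) (hU₂.prod hV₂) (hU₁n.prod hV₁n) (hU₂n.prod hV₂n)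
  rw [Set.mem_preimage, Prod.map_iterate] at hp2
  obtain ⟨hx1, hy1⟩ := hp1
  obtain ⟨hx2, hy2⟩ := hp2
  refine ⟨U₁ ∩ f^[m] ⁻¹' U₂, V₁ ∩ f^[m] ⁻¹' V₂,
    hU₁.inter ((hf.iterate m).isOpen_preimage _ hU₂),
    hV₁.inter ((hf.iterate m).isOpen_preimage _ hV₂),
    ⟨p.1, hx1, hx2⟩, ⟨p.2, hy1, hy2⟩, ?_⟩
  rintro n ⟨z, ⟨hz1, hz2⟩, hz3⟩
  rw [Set.mem_preimage] at hz3
  obtain ⟨hz4, hz5⟩ := hz3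
  rw [Set.mem_preimage] at hz5
  refine ⟨⟨z, hz1, hz4⟩, ⟨f^[m] z, hz2, ?_⟩⟩
  rw [Set.mem_preimage, ← Function.iterate_add_apply, Nat.add_comm,
    Function.iterate_add_apply]
  exact hz5

/-- Finite merging: weak mixing merges finitely many hitting-time conditions. -/
lemma wm_merge_finset {X : Type*} [TopologicalSpace X] [Nonempty X] {f : X → X}
    (hwm : WeaklyMixing f) (hf : Continuous f) {r : ℕ}
    {U V : Fin r → Set X} (hU : ∀ i, IsOpen (U i)) (hV : ∀ i, IsOpen (V i))
    (hUn : ∀ i, (U i).Nonempty) (hVn : ∀ i, (V i).Nonempty)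
    (S : Finset (Fin r)) :
    ∃ U' V' : Set X, IsOpen U' ∧ IsOpen V' ∧ U'.Nonempty ∧ V'.Nonempty ∧
      ∀ n, (U' ∩ f^[n] ⁻¹' V').Nonempty →
        ∀ i ∈ S, (U i ∩ f^[n] ⁻¹' V i).Nonempty := by
  induction S using Finset.induction with
  | empty =>
    exact ⟨Set.univ, Set.univ, isOpen_univ, isOpen_univ, Set.univ_nonempty,
      Set.univ_nonempty, fun n _ i hi => absurd hi (by simp)⟩
  | @insert x S hx ih =>
    obtain ⟨U', V', hU'o, hV'o, hU'n, hV'n, hkey⟩ := ih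
    obtain ⟨U'', V'', hU''o, hV''o, hU''n, hV''n, hkey2⟩ :=
      wm_merge hwm hf (hU x) (hV x) hU'o hV'o (hUn x) (hVn x) hU'n hV'n
    refine ⟨U'', V'', hU''o, hV''o, hU''n, hV''n, fun n hn i hi => ?_⟩
    obtain ⟨h1, h2⟩ := hkey2 n hn
    rcases Finset.mem_insert.mp hi with h | h
    · exact h ▸ h1
    · exact hkey n h2 i h

/-- Extract a basic box neighborhood inside an open set in `Fin r → X`. -/
lemma exists_box {X : Type*} [TopologicalSpace X] {r : ℕ} {W : Set (Fin r → X)}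
    (hW : IsOpen W) {w : Fin r → X} (hw : w ∈ W) :
    ∃ W' : Fin r → Set X, (∀ i, IsOpen (W' i)) ∧ (∀ i, w i ∈ W' i) ∧
      Set.pi Set.univ W' ⊆ W := by
  obtain ⟨I, u, hu, hsub⟩ := isOpen_pi_iff.mp hW w hw
  refine ⟨fun i => if i ∈ I then u i else Set.univ, fun i => ?_, fun i => ?_, ?_⟩
  · by_cases h : i ∈ I <;> simp [h, (hu _ · |>.1)]
  · by_cases h : i ∈ I <;> simp [h, (hu _ · |>.2)]
  · intro y hy
    refine hsub fun i hi => ?_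
    have := hy i (Set.mem_univ i)
    have hi2 : i ∈ I := hi
    simpa [hi2] using this

theorem stmt16 {X : Type*} [MetricSpace X] [CompactSpace X] (f : X → X)
    (hf : Continuous f) :
    StronglyMultiTrans f ↔ WeaklyMixing f ∧ MultiTrans f := by
  constructor
  · intro h
    constructor
    · -- weak mixing from the vector (1,1)
      intro U V hU hV hUn hVn
      have hcont : Continuous (fun y : Fin 2 → X => (y 0, y 1)) := by continuity
      obtain ⟨n, hn, y, hyU, hyV⟩ := h 2 (by norm_num) (fun _ => 1) (fun _ => one_pos)
        ((fun y : Fin 2 → X => (y 0, y 1)) ⁻¹' U)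
        ((fun y : Fin 2 → X => (y 0, y 1)) ⁻¹' V)
        (hU.preimage hcont) (hV.preimage hcont)
        (by obtain ⟨p, hp⟩ := hUn; exact ⟨![p.1, p.2], by simpa using hp⟩)
        (by obtain ⟨p, hp⟩ := hVn; exact ⟨![p.1, p.2], by simpa using hp⟩)
      refine ⟨n, hn, (y 0, y 1), hyU, ?_⟩
      rw [Set.mem_preimage] at hyV ⊢
      rw [prodIter_iterate] at hyV
      rw [Prod.map_iterate]
      simpa using hyV
    · intro n hn
      exact h n hn _ fun i => Nat.succ_pos _
  · rintro ⟨hwm, hmt⟩ r hr a ha U V hU hV hUn hVn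
    obtain ⟨u, hu⟩ := hUn
    obtain ⟨v, hv⟩ := hVn
    have : Nonempty X := ⟨u ⟨0, hr⟩⟩
    obtain ⟨Us, hUso, hUsm, hUsub⟩ := exists_box hU hu
    obtain ⟨Vs, hVso, hVsm, hVsub⟩ := exists_box hV hv
    set m := Finset.univ.sup a with hm
    have ham : ∀ i, a i ≤ m := fun i => Finset.le_sup (Finset.mem_univ i)
    have hmpos : 0 < m := lt_of_lt_of_le (ha ⟨0, hr⟩) (ham ⟨0, hr⟩)
    -- for each coordinate value j+1, merge all conditions with a i = j+1
    have H : ∀ j : Fin m, ∃ U' V' : Set X,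
        IsOpen U' ∧ IsOpen V' ∧ U'.Nonempty ∧ V'.Nonempty ∧
        ∀ n, (U' ∩ f^[n] ⁻¹' V').Nonempty →
          ∀ i ∈ Finset.univ.filter (fun i => a i = (j : ℕ) + 1),
            (Us i ∩ f^[n] ⁻¹' Vs i).Nonempty :=
      fun j => wm_merge_finset hwm hf hUso hVso
        (fun i => ⟨u i, hUsm i⟩) (fun i => ⟨v i, hVsm i⟩) _
    choose U' V' hU'o hV'o hU'n hV'n hkey using H
    obtain ⟨n, hn, y, hyU, hyV⟩ := hmt m hmpos (Set.pi Set.univ U') (Set.pi Set.univ V')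
      (isOpen_set_pi Set.finite_univ fun i _ => hU'o i)
      (isOpen_set_pi Set.finite_univ fun i _ => hV'o i)
      ⟨fun j => (hU'n j).some, fun j _ => (hU'n j).some_mem⟩
      ⟨fun j => (hV'n j).some, fun j _ => (hV'n j).some_mem⟩
    rw [Set.mem_preimage, prodIter_iterate] at hyV
    have key : ∀ i : Fin r, ∃ x, x ∈ Us i ∧ f^[n * a i] x ∈ Vs i := by
      intro i
      have hai := ha i
      have haim := ham i
      set j : Fin m := ⟨a i - 1, by omega⟩ with hj
      have hji : (j : ℕ) + 1 = a i := by simp [hj]; omega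
      have hhit : (U' j ∩ f^[n * ((j : ℕ) + 1)] ⁻¹' V' j).Nonempty :=
        ⟨y j, hyU j (Set.mem_univ j), hyV j (Set.mem_univ j)⟩
      have := hkey j _ hhit i (by simp [hji])
      rw [hji] at this
      obtain ⟨x, hx1, hx2⟩ := this
      exact ⟨x, hx1, hx2⟩
    choose x hx1 hx2 using key
    refine ⟨n, hn, x, hUsub fun i _ => hx1 i, ?_⟩
    rw [Set.mem_preimage, prodIter_iterate]
    exact hVsub fun i _ => hx2 i
end

section
/- Let P = ⋃_{k=1}^∞ {2^{2k−1}, 2^{2k−1}+1, …, 2^{2k}−1} ⊆ ℕ and let Σ_P = {x ∈ {0,1}^{ℤ₊} : x_i = x_j = 1 ⟹ |i−j| ∈ P ∪ {0}} be the associated spacing subshift with shift map σ_P. Then σ_P×σ_P² is not transitive on Σ_P×Σ_P; in particular, with U = V = [1]_P×[1]_P where [1]_P = {x ∈ Σ_P : x₀ = 1}, we have (σ_P×σ_P²)ⁿ(U) ∩ V = ∅ for all n ∈ ℕ. -/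
open Set Function

/-- `P = ⋃_{k≥1} [2^{2k−1}, 2^{2k}−1]`. -/
def P17 : Set ℕ :=
  {m | ∃ k : ℕ, 1 ≤ k ∧ 2 ^ (2 * k - 1) ≤ m ∧ m < 2 ^ (2 * k)}

/-- The spacing subshift `Σ_P`: any two positions carrying symbol 1 differ by an
element of `P ∪ {0}`. -/
def SigmaP : Set (ℕ → Bool) :=
  {x | ∀ i j : ℕ, x i = true → x j = true → i < j → j - i ∈ P17}

/-- The shift map on `{0,1}^{ℤ₊}`. -/
def shf : (ℕ → Bool) → (ℕ → Bool) := fun x i => x (i + 1)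

lemma shf_iter (n : ℕ) (x : ℕ → Bool) (i : ℕ) : shf^[n] x i = x (i + n) := by
  induction n generalizing x i with
  | zero => simp
  | succ n ih =>
    rw [Function.iterate_succ_apply, ih]
    simp [shf, Nat.add_assoc, Nat.add_comm 1 n]

lemma double_not_mem {m : ℕ} (hm : m ∈ P17) : 2 * m ∉ P17 := by
  obtain ⟨k, hk1, hlo, hhi⟩ := hm
  rintro ⟨k', hk'1, hlo', hhi'⟩
  have h1 : 2 ^ (2 * k) ≤ 2 * m := by
    have : 2 * 2 ^ (2 * k - 1) ≤ 2 * m := by omega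
    calc 2 ^ (2 * k) = 2 * 2 ^ (2 * k - 1) := by
          rw [← pow_succ']; congr 1; omega
      _ ≤ 2 * m := this
  have h2 : 2 * m < 2 ^ (2 * k + 1) := by
    have : 2 * m < 2 * 2 ^ (2 * k) := by omega
    calc 2 * m < 2 * 2 ^ (2 * k) := this
      _ = 2 ^ (2 * k + 1) := (pow_succ' 2 _).symm
  -- from h1 and hhi' : 2^(2k) < 2^(2k'), so k < k'
  have hk_lt : 2 * k < 2 * k' := by
    have := lt_of_le_of_lt h1 hhi'
    exact (pow_lt_pow_iff_right₀ (a := 2) one_lt_two).mp this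
  -- from hlo' and h2 : 2^(2k'-1) < 2^(2k+1), so 2k'-1 < 2k+1
  have hk_gt : 2 * k' - 1 < 2 * k + 1 := by
    have := lt_of_le_of_lt hlo' h2
    exact (pow_lt_pow_iff_right₀ (a := 2) one_lt_two).mp this
  omega

lemma shf2_iter (n : ℕ) (x : ℕ → Bool) (i : ℕ) : (shf ∘ shf)^[n] x i = x (i + 2 * n) := by
  induction n generalizing x i with
  | zero => simp
  | succ n ih =>
    rw [Function.iterate_succ_apply, ih]
    simp only [Function.comp, shf]
    congr 1

lemma no_return (n : ℕ) (hn : 0 < n) (p : (ℕ → Bool) × (ℕ → Bool))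
    (h1 : p.1 ∈ SigmaP) (h2 : p.2 ∈ SigmaP) (ha : p.1 0 = true) (hb : p.2 0 = true) :
    ¬(shf^[n] p.1 0 = true ∧ (shf ∘ shf)^[n] p.2 0 = true) := by
  rintro ⟨hx, hy⟩
  rw [shf_iter] at hx
  have hy' : p.2 (2 * n) = true := by
    rw [shf2_iter] at hy
    simpa using hy
  have hnP : n ∈ P17 := by simpa using h1 0 n ha (by simpa using hx) hn
  have h2nP : 2 * n ∈ P17 := by simpa using h2 0 (2 * n) hb hy' (by omega)
  exact double_not_mem hnP h2nP

theorem stmt17 :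
    -- `σ_P × σ_P²` is not transitive on `Σ_P × Σ_P` (in the relative topology):
    (¬ ∀ U V : Set ((ℕ → Bool) × (ℕ → Bool)), IsOpen U → IsOpen V →
        (U ∩ SigmaP ×ˢ SigmaP).Nonempty → (V ∩ SigmaP ×ˢ SigmaP).Nonempty →
        ∃ n : ℕ, 0 < n ∧ ∃ p ∈ U ∩ SigmaP ×ˢ SigmaP,
          (shf^[n] p.1, (shf ∘ shf)^[n] p.2) ∈ V ∩ SigmaP ×ˢ SigmaP) ∧
    -- in particular, with `U = V = [1]_P × [1]_P`,
    -- `(σ_P × σ_P²)ⁿ(U) ∩ V = ∅` for every `n ≥ 1`: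
    (∀ n : ℕ, 0 < n → ∀ p : (ℕ → Bool) × (ℕ → Bool),
        p.1 ∈ SigmaP → p.2 ∈ SigmaP → p.1 0 = true → p.2 0 = true →
        ¬(shf^[n] p.1 0 = true ∧ (shf ∘ shf)^[n] p.2 0 = true)) := by
  constructor
  · intro H
    set U : Set ((ℕ → Bool) × (ℕ → Bool)) := {q | q.1 0 = true ∧ q.2 0 = true} with hU
    have hopen : IsOpen U := by
      have : U = (fun q : (ℕ → Bool) × (ℕ → Bool) => q.1 0) ⁻¹' {true} ∩
          (fun q : (ℕ → Bool) × (ℕ → Bool) => q.2 0) ⁻¹' {true} := by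
        ext q; simp [hU]
      rw [this]
      exact ((continuous_apply 0).comp continuous_fst).isOpen_preimage _ (isOpen_discrete _) |>.inter
        (((continuous_apply 0).comp continuous_snd).isOpen_preimage _ (isOpen_discrete _))
    have hx0 : (fun i : ℕ => i == 0) ∈ SigmaP := by
      intro i j hi hj hij
      simp at hi hj
      omega
    have hne : (U ∩ SigmaP ×ˢ SigmaP).Nonempty := by
      refine ⟨⟨fun i => i == 0, fun i => i == 0⟩, ?_, hx0, hx0⟩
      simp [hU]
    obtain ⟨n, hn, p, ⟨⟨ha, hb⟩, h1, h2⟩, ⟨hc, hd⟩, -⟩ := H U U hopen hopen hne hne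
    exact no_return n hn p h1 h2 ha hb ⟨hc, hd⟩
  · exact no_return
end

section
/- For every integer p > 2, let F = {11} ∪ {1u1v1 : u,v words over {0,1} with (p−1)(|u|+1) = |v|+1} and let X ⊆ {0,1}^ℤ be the two-sided subshift of all sequences in which no word from F appears. Then (X, σ|_X) is not Δ-transitive with respect to (1,p): there is no x ∈ X such that {(σⁿ(x), σ^{pn}(x)) : n ∈ ℕ} is dense in X². -/
open Set Function

/-- `x ∈ {0,1}^ℤ` avoids every word of
`F = {11} ∪ {1u1v1 : (p−1)(|u|+1) = |v|+1}`. -/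
def AvoidsF (p : ℕ) (x : ℤ → Bool) : Prop :=
  (∀ j : ℤ, ¬(x j = true ∧ x (j + 1) = true)) ∧
  (∀ (j : ℤ) (m l : ℕ), (p - 1) * (m + 1) = l + 1 →
    ¬(x j = true ∧ x (j + (m : ℤ) + 1) = true ∧
      x (j + (m : ℤ) + 1 + (l : ℤ) + 1) = true))

/-- The subshift `X` of all two-sided sequences avoiding `F`. -/
def XsubF (p : ℕ) : Set (ℤ → Bool) := {x | AvoidsF p x}

/-- The sequence with a single `1` at position `c`. -/
def oneAt (c : ℤ) : ℤ → Bool := fun i => decide (i = c)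

lemma oneAt_mem (p : ℕ) (c : ℤ) : oneAt c ∈ XsubF p := by
  constructor
  · rintro j ⟨h1, h2⟩
    simp only [oneAt, decide_eq_true_eq] at h1 h2
    omega
  · rintro j m l - ⟨h1, h2, -⟩
    simp only [oneAt, decide_eq_true_eq] at h1 h2
    omega

/-- For every `p > 2`, `(X, σ|_X)` is not Δ-transitive with respect to `(1,p)`:
no `x ∈ X` has `{(σⁿx, σ^{pn}x) : n ∈ ℕ}` dense in `X × X`. -/
theorem stmt18 (p : ℕ) (hp : 2 < p) :
    ¬ ∃ x ∈ XsubF p,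
      ∀ W : Set ((ℤ → Bool) × (ℤ → Bool)), IsOpen W →
        (W ∩ XsubF p ×ˢ XsubF p).Nonempty →
        ∃ n : ℕ, 0 < n ∧
          ((fun i : ℤ => x (i + (n : ℤ))), (fun i : ℤ => x (i + (p * n : ℕ)))) ∈ W := by
  rintro ⟨x, hx, hdense⟩
  -- First application: find `n₁ > 0` with `x n₁ = 1`.
  obtain ⟨n₁, hn₁pos, hW₁⟩ := hdense {w | w.1 0 = true}
    (by
      have h : Continuous fun w : (ℤ → Bool) × (ℤ → Bool) => w.1 0 :=
        (continuous_apply (0 : ℤ)).comp continuous_fst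
      exact h.isOpen_preimage ({true} : Set Bool) (isOpen_discrete _))
    ⟨(oneAt 0, oneAt 0), by simp [oneAt], oneAt_mem p 0, oneAt_mem p 0⟩
  simp only [mem_setOf_eq, zero_add] at hW₁
  -- hW₁ : x n₁ = true
  -- Second application: find `m > 0` with `x (n₁+1+m) = 1` and `x (n₁+p+p*m) = 1`.
  obtain ⟨m, hmpos, hW₂⟩ := hdense
    {w | w.1 ((n₁ : ℤ) + 1) = true ∧ w.2 ((n₁ : ℤ) + p) = true}
    (by
      have h1 : Continuous fun w : (ℤ → Bool) × (ℤ → Bool) => w.1 ((n₁ : ℤ) + 1) :=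
        (continuous_apply _).comp continuous_fst
      have h2 : Continuous fun w : (ℤ → Bool) × (ℤ → Bool) => w.2 ((n₁ : ℤ) + p) :=
        (continuous_apply _).comp continuous_snd
      exact IsOpen.inter
        (h1.isOpen_preimage ({true} : Set Bool) (isOpen_discrete _))
        (h2.isOpen_preimage ({true} : Set Bool) (isOpen_discrete _)))
    ⟨(oneAt ((n₁ : ℤ) + 1), oneAt ((n₁ : ℤ) + p)),
      ⟨by simp [oneAt], by simp [oneAt]⟩, oneAt_mem p _, oneAt_mem p _⟩
  simp only [mem_setOf_eq] at hW₂
  obtain ⟨h1, h2⟩ := hW₂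
  -- h1 : x ((n₁:ℤ)+1 + m) = true,  h2 : x ((n₁:ℤ)+p + (p*m:ℕ)) = true
  have hp1 : (1 : ℕ) ≤ p := by omega
  set L : ℕ := (p - 1) * (m + 1) with hLdef
  have hLpos : 1 ≤ L := Nat.one_le_iff_ne_zero.mpr (by
    have : 0 < (p - 1) * (m + 1) := Nat.mul_pos (by omega) (by omega)
    omega)
  have hLZ : (L : ℤ) = ((p : ℤ) - 1) * ((m : ℤ) + 1) := by
    rw [hLdef]
    push_cast [Nat.cast_sub hp1]
    ring
  refine hx.2 (n₁ : ℤ) m (L - 1) ?_ ⟨hW₁, ?_, ?_⟩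
  · omega
  · have : (n₁ : ℤ) + (m : ℤ) + 1 = (n₁ : ℤ) + 1 + m := by ring
    rw [this]; exact h1
  · have heq : (n₁ : ℤ) + (m : ℤ) + 1 + ((L - 1 : ℕ) : ℤ) + 1
        = (n₁ : ℤ) + (p : ℤ) + ((p * m : ℕ) : ℤ) := by
      have hcast : ((L - 1 : ℕ) : ℤ) = (L : ℤ) - 1 := by
        push_cast [Nat.cast_sub hLpos]; ring
      rw [hcast, hLZ]
      push_cast
      ring
    rw [heq]; exact h2
end
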